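/- If F : X^n → X is associative and symmetric, then F is ultrabisymmetric. Consequently, if F is quasitrivial, then F is associative and symmetric if and only if F is ultrabisymmetric; and if F is quasitrivial and symmetric, then F is associative if and only if F is bisymmetric. -/

import Mathlib

/-- `F` is quasitrivial: it always outputs one of its arguments. -/
def Quasitrivial {X : Type*} {n : ℕ} (F : (Fin n → X) → X) : Prop :=
  ∀ x : Fin n → X, ∃ i, F x = x i

/-- `F` is symmetric: invariant under permutation of its arguments. -/
def Symm {X : Type*} {n : ℕ} (F : (Fin n → X) → X) : Prop :=
  ∀ (x : Fin n → X) (σ : Equiv.Perm (Fin n)), F (x ∘ σ) = F x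

/-- `F` is nondecreasing in each argument. -/
def Nondecr {X : Type*} [LinearOrder X] {n : ℕ} (F : (Fin n → X) → X) : Prop :=
  ∀ x y : Fin n → X, (∀ i, x i ≤ y i) → F x ≤ F y

/-- `x` is an isolated point for `F`. -/
def Isolated {X : Type*} {n : ℕ} (F : (Fin n → X) → X) (x : Fin n → X) : Prop :=
  ∀ y : Fin n → X, F y = F x → y = x

/-- `e` is a neutral element of the `n`-ary operation `F`. -/
def Neutral {X : Type*} {n : ℕ} (F : (Fin n → X) → X) (e : X) : Prop :=
  ∀ (i : Fin n) (x : X), F (Function.update (fun _ => e) i x) = x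

/-- `n`-ary associativity: substituting `F` over the block of `n` consecutive
arguments starting at position `i` (0-based) of a `(2n-1)`-tuple gives the same
result as substituting over the block starting at position `i+1`. -/
def NAssoc {X : Type*} (n : ℕ) (F : (Fin n → X) → X) : Prop :=
  ∀ (x : ℕ → X) (i : ℕ), i + 2 ≤ n →
    F (fun j : Fin n => if (j : ℕ) < i then x j
        else if (j : ℕ) = i then F (fun k : Fin n => x (i + k)) else x (j + n - 1))
    = F (fun j : Fin n => if (j : ℕ) < i + 1 then x j
        else if (j : ℕ) = i + 1 then F (fun k : Fin n => x (i + 1 + k)) else x (j + n - 1))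

/-- `F` is bisymmetric. -/
def Bisymm {X : Type*} {n : ℕ} (F : (Fin n → X) → X) : Prop :=
  ∀ M : Fin n → Fin n → X,
    F (fun i => F (M i)) = F (fun j => F (fun i => M i j))

/-- `F` is ultrabisymmetric: the value `F (F ∘ rows)` is unchanged when two
entries of the matrix are exchanged. -/
def UltraBisymm {X : Type*} {n : ℕ} (F : (Fin n → X) → X) : Prop :=
  ∀ (M : Fin n → Fin n → X) (p q : Fin n × Fin n),
    F (fun i => F (M i)) =
    F (fun i => F (fun j =>
      if (i, j) = p then M q.1 q.2 else if (i, j) = q then M p.1 p.2 else M i j))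

/-- Iterated left composition `x 0 ∘ x 1 ∘ ⋯ ∘ x k` for a binary operation. -/
def iterComp {X : Type*} (H : X → X → X) (x : ℕ → X) : ℕ → X
  | 0 => x 0
  | k + 1 => H (iterComp H x k) (x (k + 1))

/-- The `n`-ary operation `F` is derived from the binary operation `H`. -/
def DerivedFrom {X : Type*} {n : ℕ} (F : (Fin n → X) → X) (H : X → X → X) : Prop :=
  ∀ x : ℕ → X, F (fun i : Fin n => x i) = iterComp H x (n - 1)

/-!
For symmetric `F`, `n`-ary associativity is equivalent to the exchange law
`F (F (a, c), b, t) = F (F (b, c), a, t)`, where `c` has `n - 1` entries and `t` has `n - 2`.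

Viewing `F (F ∘ rows)` as a function of the `n²` entries of the matrix, ultrabisymmetry says that
it is invariant under every permutation of the entries. Transpositions of entries are generated by
swaps inside a row and swaps inside a column. Row swaps are harmless for symmetric `F`; a column
swap follows from repeated use of the exchange law, or from bisymmetry by transposing.

Conversely, if `F` is quasitrivial and ultrabisymmetric, permuting inside the rows of a matrix with
equal rows shows that `F` is symmetric. A discrete intermediate value argument along
`F (b, …, b, a, …, a)` gives a tuple `y` and a slot `j` with `F (y[j ↦ a]) = a` and
`F (y[j ↦ b]) = b`; swapping `a` with that slot in a suitable matrix yields the exchange law.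
-/

open Equiv Function

section Perm

variable {ι κ X : Type*} [DecidableEq ι] [DecidableEq κ]

theorem comp_perm_of_comp_swap [Finite ι] {W : (ι → X) → X}
    (h : ∀ (N : ι → X) (x y : ι), W (N ∘ swap x y) = W N) (N : ι → X) (σ : Perm ι) :
    W (N ∘ σ) = W N := by
  induction σ using Perm.swap_induction_on generalizing N with
  | one => rfl
  | swap_mul f x y _ ih => rw [Perm.coe_mul, ← comp_assoc, ih, h]

theorem comp_swap_of_comp_swap_row_col {W : (ι × κ → X) → X}
    (hrow : ∀ (N : ι × κ → X) (i : ι) (j j' : κ), W (N ∘ swap (i, j) (i, j')) = W N)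
    (hcol : ∀ (N : ι × κ → X) (i i' : ι) (j : κ), W (N ∘ swap (i, j) (i', j)) = W N)
    (N : ι × κ → X) (p q : ι × κ) : W (N ∘ swap p q) = W N := by
  obtain ⟨i, j⟩ := p
  obtain ⟨i', j'⟩ := q
  by_cases hi : i = i'
  · subst hi; exact hrow N i j j'
  by_cases hj : j = j'
  · subst hj; exact hcol N i i' j
  have hswap : swap (i, j') (i', j') * swap (i, j) (i, j') * swap (i, j') (i', j')
      = swap (i, j) (i', j') := by
    rw [swap_mul_swap_mul_swap (by simp [hj]) (by simp [hi]), swap_comm]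
  rw [← hswap, Perm.coe_mul, Perm.coe_mul, ← comp_assoc, ← comp_assoc, hcol, hrow, hcol]

theorem curry_comp_swap {i i' : ι} (hi : i ≠ i') (N : ι × κ → X) (j j' : κ) :
    curry (N ∘ swap (i, j) (i', j')) =
      update (update (curry N) i (update (curry N i) j (N (i', j')))) i'
        (update (curry N i') j' (N (i, j))) := by
  funext k l
  by_cases hk : k = i'
  · subst hk
    by_cases hl : l = j' <;> simp [swap_apply_def, hl, hi.symm]
  by_cases hk' : k = i
  · subst hk'
    by_cases hl : l = j <;> simp [swap_apply_def, hl, hi]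
  simp [swap_apply_def, hk, hk']

end Perm

/-- Square matrices are indexed by pairs, so that permutations of the entries act by
precomposition. -/
def nested {ι X : Type*} (F : (ι → X) → X) (N : ι × ι → X) : X :=
  F fun i => F fun j => N (i, j)

section Nested

variable {X : Type*} {n : ℕ} {F : (Fin n → X) → X}

theorem ultraBisymm_iff_nested_comp_perm :
    UltraBisymm F ↔ ∀ (N : Fin n × Fin n → X) (σ : Perm (Fin n × Fin n)),
      nested F (N ∘ σ) = nested F N := by
  have key : ∀ (M : Fin n → Fin n → X) (p q : Fin n × Fin n),
      nested F (uncurry M ∘ swap p q) = F (fun i => F (fun j =>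
        if (i, j) = p then M q.1 q.2 else if (i, j) = q then M p.1 p.2 else M i j)) := by
    intro M p q
    simp only [nested, comp_apply, swap_apply_def]
    congr 1; funext i; congr 1; funext j
    split_ifs <;> rfl
  refine ⟨fun hU => comp_perm_of_comp_swap fun N p q => ?_, fun h M p q => ?_⟩
  · rw [← uncurry_curry N, key, ← hU]
    rfl
  · rw [← key, h]
    rfl

theorem UltraBisymm.bisymm (hU : UltraBisymm F) : Bisymm F := fun M =>
  (ultraBisymm_iff_nested_comp_perm.1 hU (uncurry M) (prodComm _ _)).symm

theorem UltraBisymm.symm_of_idempotent (hU : UltraBisymm F)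
    (hidem : ∀ c : X, F (fun _ => c) = c) : Symm F := fun x σ => by
  have h : F (fun _ => F (x ∘ σ)) = F (fun _ => F x) :=
    ultraBisymm_iff_nested_comp_perm.1 hU (fun p => x p.2) (prodCongr (Equiv.refl _) σ)
  rwa [hidem, hidem] at h

theorem Symm.nested_comp_swap_row (hS : Symm F) (N : Fin n × Fin n → X) (i j j' : Fin n) :
    nested F (N ∘ swap (i, j) (i, j')) = nested F N := by
  unfold nested
  congr 1
  funext k
  by_cases hk : k = i
  · subst hk
    have hrow :
        (fun l => (N ∘ swap (k, j) (k, j')) (k, l)) = (fun l => N (k, l)) ∘ swap j j' := by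
      funext l
      by_cases hl : l = j <;> by_cases hl' : l = j' <;> simp [swap_apply_def, hl, hl']
    rw [hrow, hS]
  · simp [swap_apply_of_ne_of_ne, hk]

theorem Symm.nested_comp_swap_col_of_bisymm (hS : Symm F) (hB : Bisymm F)
    (N : Fin n × Fin n → X) (i i' j : Fin n) :
    nested F (N ∘ swap (i, j) (i', j)) = nested F N := by
  have htranspose : ∀ N' : Fin n × Fin n → X, nested F (N' ∘ prodComm _ _) = nested F N' :=
    fun N' => (hB (curry N')).symm
  have hconj :
      (N ∘ swap (i, j) (i', j)) ∘ prodComm _ _ = (N ∘ prodComm _ _) ∘ swap (j, i) (j, i') := by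
    funext ⟨k, l⟩
    simp only [comp_apply, swap_apply_def, prodComm_apply, Prod.swap_prod_mk, Prod.ext_iff]
    split_ifs <;> simp_all
  rw [← htranspose, hconj, hS.nested_comp_swap_row, htranspose]

theorem Symm.ultraBisymm_of_bisymm (hS : Symm F) (hB : Bisymm F) : UltraBisymm F :=
  ultraBisymm_iff_nested_comp_perm.2 <| comp_perm_of_comp_swap <|
    comp_swap_of_comp_swap_row_col hS.nested_comp_swap_row (hS.nested_comp_swap_col_of_bisymm hB)

end Nested

section Exchange

variable {X : Type*} {m : ℕ}

theorem Symm.apply_snoc {F : (Fin (m + 1) → X) → X} (hS : Symm F) (c : Fin m → X) (b : X) :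
    F (Fin.snoc c b) = F (Fin.cons b c) := by
  rw [Fin.snoc_eq_cons_rotate]
  exact hS _ _

theorem Symm.exists_cons {F : (Fin (m + 1) → X) → X} (hS : Symm F) (j : Fin (m + 1)) :
    ∃ e : Fin m → Fin (m + 1), (∀ l, e l ≠ j) ∧
      ∀ y, F y = F (Fin.cons (y j) (y ∘ e)) := by
  refine ⟨fun l => swap 0 j l.succ, fun l => ?_, fun y => ?_⟩
  · conv_rhs => rw [← swap_apply_left 0 j]
    exact (swap 0 j).injective.ne (Fin.succ_ne_zero l)
  · rw [← hS y (swap 0 j)]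
    congr 1
    funext i
    refine Fin.cases ?_ (fun i => ?_) i <;> simp

theorem exists_perm_apply_zero_apply_one {j k : Fin (m + 2)} (h : j ≠ k) :
    ∃ σ : Perm (Fin (m + 2)), σ 0 = j ∧ σ 1 = k := by
  have hk : swap 0 j k ≠ 0 := by
    rw [Ne, swap_apply_eq_iff, swap_apply_left]
    exact h.symm
  refine ⟨swap 0 j * swap 1 (swap 0 j k), ?_, by simp⟩
  rw [Perm.mul_apply, swap_apply_of_ne_of_ne Fin.zero_ne_one hk.symm, swap_apply_left]

theorem Symm.exists_cons_cons {F : (Fin (m + 2) → X) → X} (hS : Symm F) {j k : Fin (m + 2)}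
    (h : j ≠ k) : ∃ e : Fin m → Fin (m + 2), (∀ l, e l ≠ j ∧ e l ≠ k) ∧
      ∀ y, F y = F (Fin.cons (y j) (Fin.cons (y k) (y ∘ e))) := by
  obtain ⟨σ, h0, h1⟩ := exists_perm_apply_zero_apply_one h
  refine ⟨fun l => σ l.succ.succ, fun l => ⟨?_, ?_⟩, fun y => ?_⟩
  · rw [← h0]
    exact σ.injective.ne (Fin.succ_ne_zero _)
  · rw [← h1, ← Fin.succ_zero_eq_one]
    exact σ.injective.ne ((Fin.succ_injective _).ne (Fin.succ_ne_zero _))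
  · rw [← hS y σ]
    congr 1
    funext i
    refine Fin.cases ?_ (fun i => Fin.cases ?_ (fun i => ?_) i) i <;> simp [h0, h1]

theorem Symm.apply_eq_of_forall_ne_ne {F : (Fin (m + 2) → X) → X} (hS : Symm F)
    {j k : Fin (m + 2)} (h : j ≠ k) {y y' : Fin (m + 2) → X}
    (hyy' : ∀ l, l ≠ j → l ≠ k → y l = y' l)
    (hjk : ∀ t : Fin m → X,
      F (Fin.cons (y j) (Fin.cons (y k) t)) = F (Fin.cons (y' j) (Fin.cons (y' k) t))) :
    F y = F y' := by
  obtain ⟨e, he, hFe⟩ := hS.exists_cons_cons h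
  have hye : y ∘ e = y' ∘ e := funext fun l => hyy' _ (he l).1 (he l).2
  rw [hFe y, hFe y', hye, hjk]

theorem Symm.apply_cons_cons_comm {F : (Fin (m + 2) → X) → X} (hS : Symm F) (a b : X)
    (t : Fin m → X) : F (Fin.cons a (Fin.cons b t)) = F (Fin.cons b (Fin.cons a t)) := by
  rw [← hS _ (swap 0 1)]
  congr 1
  funext i
  refine Fin.cases ?_ (fun i => Fin.cases ?_ (fun i => ?_) i) i <;>
    simp [swap_apply_def, Fin.ext_iff]

def Exchange (F : (Fin (m + 2) → X) → X) : Prop :=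
  ∀ (a b : X) (c : Fin (m + 1) → X) (t : Fin m → X),
    F (Fin.cons (F (Fin.cons a c)) (Fin.cons b t)) = F (Fin.cons (F (Fin.cons b c)) (Fin.cons a t))

variable {F : (Fin (m + 2) → X) → X}

theorem Symm.nassoc_of_exchange (hS : Symm F) (hE : Exchange F) : NAssoc (m + 2) F := by
  intro x i hi
  set c : Fin (m + 1) → X := fun l => x (i + 1 + l)
  have hP : F (fun k : Fin (m + 2) => x (i + k)) = F (Fin.cons (x i) c) := by
    congr 1
    funext k
    refine Fin.cases ?_ (fun k => ?_) k
    · simp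
    · simp [c, add_assoc, add_comm 1]
  have hQ :
      F (fun k : Fin (m + 2) => x (i + 1 + k)) = F (Fin.cons (x (i + 1 + (m + 2) - 1)) c) := by
    rw [← hS.apply_snoc]
    congr 1
    funext k
    refine Fin.lastCases ?_ (fun k => ?_) k
    · simp
    · simp [c]
  refine hS.apply_eq_of_forall_ne_ne (j := ⟨i, by omega⟩) (k := ⟨i + 1, hi⟩) (by simp)
    (fun l h1 h2 => ?_) (fun t => ?_)
  · simp only [Ne, Fin.ext_iff] at h1 h2
    split_ifs <;> first | rfl | omega
  · have hlt : ¬ i + 1 < i := by omega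
    have hne : i + 1 ≠ i := by omega
    simp only [lt_irrefl, hlt, hne, if_false, if_true, lt_add_iff_pos_right, zero_lt_one, hP, hQ]
    rw [hS.apply_cons_cons_comm (x i)]
    exact hE _ _ _ _

theorem Symm.exchange_of_nassoc (hS : Symm F) (hA : NAssoc (m + 2) F) : Exchange F := by
  intro a b c t
  rw [← hS.apply_snoc c b, hS.apply_cons_cons_comm _ a]
  obtain ⟨x, hx₁, hx₂⟩ : ∃ x : ℕ → X,
      (∀ k : Fin (m + 2), x k = (Fin.cons a c : Fin (m + 2) → X) k) ∧
      ∀ l : Fin (m + 1), x (m + 2 + l) = (Fin.cons b t : Fin (m + 1) → X) l :=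
    ⟨fun k => if h : k < m + 2 then (Fin.cons a c : Fin (m + 2) → X) ⟨k, h⟩
      else if h' : k - (m + 2) < m + 1 then (Fin.cons b t : Fin (m + 1) → X) ⟨k - (m + 2), h'⟩
      else a,
      fun k => by simp, fun l => by simp [l.is_le]⟩
  convert hA x 0 (by omega) using 2 <;> funext j
  · refine Fin.cases ?_ (fun j => ?_) j
    · simp [hx₁]
    · simp [show (j : ℕ) + 1 + (m + 2) - 1 = m + 2 + j by omega, hx₂]
  · refine Fin.cases ?_ (fun j => Fin.cases ?_ (fun j => ?_) j) j
    · simpa using (hx₁ 0).symm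
    · simp only [Fin.cons_zero, Fin.cons_succ, Fin.val_succ, Fin.val_zero, lt_irrefl, if_false,
        if_true]
      congr 1
      funext k
      refine Fin.lastCases ?_ (fun k => ?_) k
      · simpa [show 1 + (m + 1) = m + 2 by omega] using (hx₂ 0).symm
      · simpa [add_comm] using (hx₁ k.succ).symm
    · simpa [show m + 2 + (j + 1) = j + 1 + 1 + (m + 1) by omega] using (hx₂ j.succ).symm

theorem Symm.exchange_rows (hS : Symm F) (hE : Exchange F) (u v : X) (c d : Fin (m + 1) → X)
    (t : Fin m → X) :
    F (Fin.cons (F (Fin.cons u c)) (Fin.cons (F (Fin.cons v d)) t)) =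
      F (Fin.cons (F (Fin.cons v c)) (Fin.cons (F (Fin.cons u d)) t)) := by
  set z := F (Fin.cons (d 0) c)
  have key : ∀ u v, F (Fin.cons (F (Fin.cons u c)) (Fin.cons (F (Fin.cons v d)) t)) =
      F (Fin.cons (F (Fin.cons u (Fin.cons z (Fin.tail d)))) (Fin.cons v t)) := by
    intro u v
    rw [hS.apply_cons_cons_comm, hE v, ← Fin.cons_self_tail d, hE u (d 0) c,
      hS.apply_cons_cons_comm z u, Fin.tail_cons]
  rw [key, key, hE]

theorem Symm.nested_comp_swap_col_of_exchange (hS : Symm F) (hE : Exchange F)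
    (N : Fin (m + 2) × Fin (m + 2) → X) (i i' j : Fin (m + 2)) :
    nested F (N ∘ swap (i, j) (i', j)) = nested F N := by
  rcases eq_or_ne i i' with rfl | hi
  · simp
  obtain ⟨e, he, hFe⟩ := hS.exists_cons j
  have hrow : ∀ (r : Fin (m + 2) → X) (w : X), F (update r j w) = F (Fin.cons w (r ∘ e)) := by
    intro r w
    rw [hFe (update r j w), update_self]
    congr 2
    funext l
    exact update_of_ne (he l) _ _
  change F (fun k => F (curry (N ∘ _) k)) = F (fun k => F (curry N k))
  rw [curry_comp_swap hi]
  refine hS.apply_eq_of_forall_ne_ne hi (fun l hl hl' => ?_) (fun t => ?_)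
  · simp [update_of_ne hl, update_of_ne hl']
  · simp only [update_self, update_of_ne hi]
    rw [hrow, hrow, hFe (curry N i), hFe (curry N i')]
    exact (hS.exchange_rows hE _ _ _ _ t).symm

theorem Symm.ultraBisymm_of_exchange (hS : Symm F) (hE : Exchange F) : UltraBisymm F :=
  ultraBisymm_iff_nested_comp_perm.2 <| comp_perm_of_comp_swap <|
    comp_swap_of_comp_swap_row_col hS.nested_comp_swap_row (hS.nested_comp_swap_col_of_exchange hE)

end Exchange

section Quasitrivial

variable {X : Type*}

theorem Quasitrivial.apply_const {n : ℕ} {F : (Fin n → X) → X} (hQ : Quasitrivial F) (c : X) :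
    F (fun _ => c) = c := by
  obtain ⟨i, h⟩ := hQ fun _ => c
  exact h

theorem Quasitrivial.exists_update {m : ℕ} {F : (Fin (m + 1) → X) → X} (hQ : Quasitrivial F)
    (a b : X) :
    ∃ (y : Fin (m + 1) → X) (j : Fin (m + 1)),
      F (update y j a) = a ∧ F (update y j b) = b := by
  by_contra! h
  set v : ℕ → Fin (m + 1) → X := fun k i => if (i : ℕ) < k then b else a
  have hv : ∀ k ≤ m + 1, F (v k) = a := by
    intro k hk
    induction k with
    | zero => simpa [v] using hQ.apply_const a
    | succ k ih =>
      have hupd_a : update (v k) ⟨k, hk⟩ a = v k := by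
        funext i
        by_cases hi : i = ⟨k, hk⟩ <;> simp [v, hi]
      have hupd_b : update (v k) ⟨k, hk⟩ b = v (k + 1) := by
        funext i
        by_cases hi : i = ⟨k, hk⟩
        · simp [v, hi]
        · have hik : (i : ℕ) ≠ k := fun h' => hi (Fin.ext h')
          simp only [v, update_of_ne hi, Nat.lt_succ_iff_lt_or_eq, hik, or_false]
      have hne := h (v k) ⟨k, hk⟩ (by rw [hupd_a, ih (by omega)])
      rw [hupd_b] at hne
      obtain ⟨i, hi⟩ := hQ (v (k + 1))
      simp only [v] at hi
      split_ifs at hi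
      · exact absurd hi hne
      · exact hi
  have hb : F (v (m + 1)) = b := by
    rw [← hQ.apply_const b]
    congr 1
    funext i
    simp [v, i.is_lt]
  obtain rfl : a = b := (hv (m + 1) le_rfl).symm.trans hb
  exact h (fun _ => a) 0 (by simp [hQ.apply_const]) (by simp [hQ.apply_const])

theorem Quasitrivial.exchange_of_ultraBisymm {m : ℕ} {F : (Fin (m + 2) → X) → X}
    (hQ : Quasitrivial F) (hU : UltraBisymm F) : Exchange F := by
  intro a b c t
  obtain ⟨y, j, hya, hyb⟩ := hQ.exists_update a b
  have hrows : ∀ r₀ r₁ : Fin (m + 2) → X,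
      nested F (uncurry (Fin.cons r₀ (Fin.cons r₁ fun l _ => t l))) =
        F (Fin.cons (F r₀) (Fin.cons (F r₁) t)) := by
    intro r₀ r₁
    change F (fun i => F _) = _
    congr 1
    funext i
    refine Fin.cases ?_ (fun i => Fin.cases ?_ (fun l => ?_) i) i <;> simp [hQ.apply_const]
  set M : Fin (m + 2) → Fin (m + 2) → X :=
    Fin.cons (Fin.cons b c) (Fin.cons (update y j a) fun l _ => t l)
  have hswap : uncurry M ∘ swap (0, 0) (1, j) =
      uncurry (Fin.cons (Fin.cons a c) (Fin.cons (update y j b) fun l _ => t l)) := by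
    rw [← uncurry_curry (uncurry M ∘ _), curry_comp_swap Fin.zero_ne_one, curry_uncurry]
    congr 1
    funext i
    refine Fin.cases ?_ (fun i => Fin.cases ?_ (fun l => ?_) i) i
    · simp [M]
    · simp [M]
    · simp [M, Fin.ext_iff]
  have h := ultraBisymm_iff_nested_comp_perm.1 hU (uncurry M) (swap (0, 0) (1, j))
  rwa [hswap, hrows, hrows, hya, hyb] at h

end Quasitrivial

theorem stmt_18 {X : Type*} {n : ℕ} (hn : 2 ≤ n) (F : (Fin n → X) → X) :
    (NAssoc n F → Symm F → UltraBisymm F) ∧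
    (Quasitrivial F → (NAssoc n F ∧ Symm F ↔ UltraBisymm F)) ∧
    (Quasitrivial F → Symm F → (NAssoc n F ↔ Bisymm F)) := by
  obtain ⟨m, rfl⟩ : ∃ m, n = m + 2 := ⟨n - 2, by omega⟩
  have ultraBisymm_of_nassoc (hA : NAssoc (m + 2) F) (hS : Symm F) : UltraBisymm F :=
    hS.ultraBisymm_of_exchange (hS.exchange_of_nassoc hA)
  have nassoc_of_ultraBisymm (hQ : Quasitrivial F) (hS : Symm F) (hU : UltraBisymm F) :
      NAssoc (m + 2) F :=
    hS.nassoc_of_exchange (hQ.exchange_of_ultraBisymm hU)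
  refine ⟨ultraBisymm_of_nassoc, fun hQ => ⟨fun ⟨hA, hS⟩ => ultraBisymm_of_nassoc hA hS,
    fun hU => ?_⟩, fun hQ hS => ⟨fun hA => (ultraBisymm_of_nassoc hA hS).bisymm,
    fun hB => nassoc_of_ultraBisymm hQ hS (hS.ultraBisymm_of_bisymm hB)⟩⟩
  have hS := hU.symm_of_idempotent hQ.apply_const
  exact ⟨nassoc_of_ultraBisymm hQ hS hU, hS⟩
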